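/- arXiv:2512.12886 — 2 statements merged into one kernel-verified Lean document; each statement's English description precedes it below -/
import Mathlib

section
/- Let T be a finite TD-unmixed tree. Then the open neighborhood ideal N(T) in the polynomial ring k[x_v : v ∈ V(T)] over a field k is geometrically vertex decomposable. -/
open scoped Classical

section GraphDefs

variable {V : Type} (G : SimpleGraph V)

/-- A leaf is a vertex of degree 1. -/
def IsLeafVx (v : V) : Prop := (G.neighborSet v).ncard = 1

/-- The height of a vertex: the minimum distance to a leaf in its connected
component (`0` if there is no leaf reachable from it, e.g. for isolated vertices). -/
noncomputable def heightVx (v : V) : ℕ :=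
  sInf {n | ∃ l, IsLeafVx G l ∧ G.Reachable v l ∧ G.dist v l = n}

/-- The height of a graph: the maximum height of a vertex. -/
noncomputable def heightGr : ℕ := sSup (Set.range (heightVx G))

/-- A graph is balanced if no two adjacent vertices have the same height. -/
def IsBalanced : Prop := ∀ u w, G.Adj u w → heightVx G u ≠ heightVx G w

/-- The open neighborhood of a set of vertices. -/
def nbhd (S : Set V) : Set V := {u | ∃ v ∈ S, G.Adj v u}

/-- A total dominating set: `N(S) = V`. -/
def IsTDSet (S : Set V) : Prop := nbhd G S = Set.univ

/-- A minimal total dominating set. -/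
def IsMinTDSet (S : Set V) : Prop := IsTDSet G S ∧ ∀ S' ⊂ S, ¬ IsTDSet G S'

/-- A graph is TD-unmixed if all of its minimal total dominating sets have
the same cardinality. -/
def TDUnmixed : Prop :=
  ∀ S₁ S₂ : Set V, IsMinTDSet G S₁ → IsMinTDSet G S₂ → S₁.ncard = S₂.ncard

/-- A forest is TD-unmixed if every connected component is TD-unmixed. -/
def ComponentwiseTDUnmixed : Prop :=
  ∀ c : G.ConnectedComponent, TDUnmixed (G.induce c.supp)

end GraphDefs

section GVDDefs

/-- The squarefree monomial whose support is the finite set `s`. -/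
noncomputable def sqMono (k : Type) [Field k] {σ : Type} (s : Finset σ) : MvPolynomial σ k :=
  ∏ i ∈ s, MvPolynomial.X i

/-- The squarefree monomial ideal generated by the monomials with supports in `F`. -/
noncomputable def sqSpan (k : Type) [Field k] {σ : Type} (F : Set (Finset σ)) :
    Ideal (MvPolynomial σ k) :=
  Ideal.span {m | ∃ s ∈ F, m = sqMono k s}

/-- The height of a prime ideal. -/
noncomputable def primeHt {R : Type*} [CommRing R] (P : Ideal R) (hP : P.IsPrime) : ℕ∞ :=
  Order.height (⟨P, hP⟩ : PrimeSpectrum R)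

/-- An ideal is unmixed if all of its minimal primes have the same height. -/
def UnmixedIdeal {R : Type*} [CommRing R] (I : Ideal R) : Prop :=
  ∀ P Q : Ideal R, ∀ hP : P ∈ I.minimalPrimes, ∀ hQ : Q ∈ I.minimalPrimes,
    primeHt P hP.1.1 = primeHt Q hQ.1.1

/-- View a finset of `σ` as a finset of `{x : σ // x ≠ y}` (dropping `y`). -/
noncomputable def dropVar {σ : Type} (y : σ) (s : Finset σ) : Finset {x : σ // x ≠ y} :=
  s.subtype (· ≠ y)

/-- Supports of the generators of `N_{y,I}`: the given generators not divisible by `y`. -/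
def NFam {σ : Type} (y : σ) (F : Set (Finset σ)) : Set (Finset σ) := {s ∈ F | y ∉ s}

/-- Supports of the generators of `C_{y,I}`: the given generators with `y` divided out
(together with the generators not divisible by `y`). -/
noncomputable def CFam {σ : Type} (y : σ) (F : Set (Finset σ)) : Set (Finset σ) :=
  (fun s => s.erase y) '' F

/-- A squarefree monomial ideal `I` is geometrically vertex decomposable if it is unmixed
and either (1) `I = ⟨1⟩` or `I` is generated by a subset of the variables, or (2) there is
a set of squarefree monomial generators of `I` and a variable `y` such that
`I = C_{y,I} ∩ (N_{y,I} + ⟨y⟩)` and both `C_{y,I}` and `N_{y,I}` are geometrically vertex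
decomposable in the polynomial ring omitting the variable `y`. -/
inductive IsGVD (k : Type) [Field k] : (σ : Type) → Ideal (MvPolynomial σ k) → Prop where
  | base (σ : Type) (I : Ideal (MvPolynomial σ k)) (hunm : UnmixedIdeal I)
      (h : I = ⊤ ∨ ∃ W : Set σ, I = Ideal.span (MvPolynomial.X '' W)) : IsGVD k σ I
  | step (σ : Type) (I : Ideal (MvPolynomial σ k)) (hunm : UnmixedIdeal I)
      (F : Set (Finset σ)) (hgen : I = sqSpan k F) (y : σ)
      (hdec : I = sqSpan k (CFam y F) ⊓ (sqSpan k (NFam y F) ⊔ Ideal.span {MvPolynomial.X y}))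
      (hC : IsGVD k {x : σ // x ≠ y} (sqSpan k (dropVar y '' CFam y F)))
      (hN : IsGVD k {x : σ // x ≠ y} (sqSpan k (dropVar y '' NFam y F))) :
      IsGVD k σ I

end GVDDefs

section ONIDefs

variable {V : Type} [Fintype V]

/-- The open neighborhood of a vertex, as a finset. -/
noncomputable def nbrFinset (G : SimpleGraph V) (v : V) : Finset V :=
  (Set.toFinite (G.neighborSet v)).toFinset

/-- The open neighborhood ideal of a graph: generated by the monomials `X_{N(v)}`
for all vertices `v`. -/
noncomputable def ONI (k : Type) [Field k] (G : SimpleGraph V) : Ideal (MvPolynomial V k) :=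
  sqSpan k {s | ∃ v : V, s = nbrFinset G v}

end ONIDefs

/-!
The minimal primes of a squarefree monomial ideal `sqSpan k F` are the ideals generated by the
minimal transversals of `F`, and a permutation of the variables shows that their heights only
depend on the sizes of those transversals; for the open neighbourhood ideal these are the
minimal total dominating sets, so TD-unmixedness gives unmixedness. The decomposition
`I = C ∩ (N + ⟨y⟩)` holds for every squarefree monomial ideal and every variable `y`, so one only
has to choose `y` well. In a tree, the neighbourhood of a vertex farthest from a root meets the
other neighbourhoods in at most one vertex `y` (its parent). For this `y`, minimal transversals
of `C` are minimal transversals of `F`, and those of `N` become minimal transversals of `F` after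
adding `y`; so both stay transversal-unmixed, and both are again families of subsets of distinct
neighbourhoods of the tree. Induction on the number of variables concludes.
-/

open MvPolynomial SimpleGraph

section Transversals

variable {σ : Type} {F : Set (Finset σ)}

def IsTransversal (F : Set (Finset σ)) (t : Set σ) : Prop := ∀ e ∈ F, ∃ x ∈ e, x ∈ t

def TransversalUnmixed (F : Set (Finset σ)) : Prop :=
  ∀ t₁ t₂, Minimal (IsTransversal F) t₁ → Minimal (IsTransversal F) t₂ → t₁.ncard = t₂.ncard

def MeetsOthersOnlyAt (F : Set (Finset σ)) (e : Finset σ) (y : σ) : Prop :=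
  ∀ x ∈ e, x ≠ y → ∀ f ∈ F, x ∈ f → f = e

lemma exists_private_of_minimal_isTransversal {t : Set σ} (ht : Minimal (IsTransversal F) t)
    {x : σ} (hx : x ∈ t) : ∃ e ∈ F, x ∈ e ∧ ∀ z ∈ e, z ∈ t → z = x := by
  by_contra! hcon
  have htr : IsTransversal F (t \ {x}) := by
    intro e he
    by_cases hxe : x ∈ e
    · obtain ⟨z, hze, hzt, hzx⟩ := hcon e he hxe
      exact ⟨z, hze, hzt, hzx⟩
    · obtain ⟨z, hze, hzt⟩ := ht.1 e he
      exact ⟨z, hze, hzt, by rintro rfl; exact hxe hze⟩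
  exact (ht.2 htr Set.sdiff_subset hx).2 rfl

lemma minimal_isTransversal_insert {e : Finset σ} {y : σ} (he : e ∈ F) (hy : y ∈ e)
    (hmeet : MeetsOthersOnlyAt F e y) {t : Set σ} (ht : Minimal (IsTransversal (NFam y F)) t) :
    y ∉ t ∧ Minimal (IsTransversal F) (insert y t) := by
  have hyt : y ∉ t := fun hyt => by
    obtain ⟨f, ⟨-, hyf⟩, hy', -⟩ := exists_private_of_minimal_isTransversal ht hyt
    exact hyf hy'
  have hdisj : ∀ x ∈ t, x ∉ e := by
    intro x hxt hxe
    obtain ⟨f, ⟨hf, hyf⟩, hxf, -⟩ := exists_private_of_minimal_isTransversal ht hxt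
    have hxy : x ≠ y := by rintro rfl; exact hyt hxt
    exact hyf (hmeet x hxe hxy f hf hxf ▸ hy)
  refine ⟨hyt, fun f hf => ?_, fun s hs hsub => ?_⟩
  · by_cases hyf : y ∈ f
    · exact ⟨y, hyf, Set.mem_insert y t⟩
    · obtain ⟨x, hxf, hxt⟩ := ht.1 f ⟨hf, hyf⟩
      exact ⟨x, hxf, Set.mem_insert_of_mem y hxt⟩
  by_cases hys : y ∈ s
  · have hs' : IsTransversal (NFam y F) (s \ {y}) := by
      rintro f ⟨hf, hyf⟩
      obtain ⟨x, hxf, hxs⟩ := hs f hf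
      exact ⟨x, hxf, hxs, by rintro rfl; exact hyf hxf⟩
    have hts : t ⊆ s \ {y} := ht.2 hs' fun x hx => (hsub hx.1).resolve_left hx.2
    exact Set.insert_subset hys (hts.trans Set.sdiff_subset)
  · obtain ⟨x, hxe, hxs⟩ := hs e he
    have hxt : x ∈ t := (hsub hxs).resolve_left (by rintro rfl; exact hys hxs)
    exact absurd hxe (hdisj x hxt)

lemma TransversalUnmixed.NFam [Finite σ] (hu : TransversalUnmixed F) {e : Finset σ} {y : σ}
    (he : e ∈ F) (hy : y ∈ e) (hmeet : MeetsOthersOnlyAt F e y) :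
    TransversalUnmixed (NFam y F) := by
  intro t₁ t₂ h₁ h₂
  obtain ⟨hy₁, hm₁⟩ := minimal_isTransversal_insert he hy hmeet h₁
  obtain ⟨hy₂, hm₂⟩ := minimal_isTransversal_insert he hy hmeet h₂
  have := hu _ _ hm₁ hm₂
  rwa [Set.ncard_insert_of_notMem hy₁, Set.ncard_insert_of_notMem hy₂, add_left_inj] at this

lemma isTransversal_image_dropVar {y : σ} {t : Set {x : σ // x ≠ y}} :
    IsTransversal (dropVar y '' F) t ↔ IsTransversal F (Subtype.val '' t) := by
  simp [IsTransversal, dropVar]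

lemma minimal_isTransversal_val_image {y : σ} {t : Set {x : σ // x ≠ y}}
    (ht : Minimal (IsTransversal (dropVar y '' F)) t) :
    Minimal (IsTransversal F) (Subtype.val '' t) := by
  refine ⟨isTransversal_image_dropVar.1 ht.1, fun s hs hsub => ?_⟩
  have hs' : Subtype.val '' (Subtype.val ⁻¹' s) = s :=
    Set.image_preimage_eq_of_subset (hsub.trans (Set.image_subset_range _ _))
  have hts : t ⊆ Subtype.val ⁻¹' s := by
    refine ht.2 (isTransversal_image_dropVar.2 (by rwa [hs'])) fun x hx => ?_
    exact Subtype.val_injective.mem_set_image.1 (hsub hx)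
  exact hs' ▸ Set.image_mono hts

lemma TransversalUnmixed.image_dropVar (hu : TransversalUnmixed F) (y : σ) :
    TransversalUnmixed (dropVar y '' F) := by
  intro t₁ t₂ h₁ h₂
  have := hu _ _ (minimal_isTransversal_val_image h₁) (minimal_isTransversal_val_image h₂)
  rwa [Set.ncard_image_of_injective _ Subtype.val_injective,
    Set.ncard_image_of_injective _ Subtype.val_injective] at this

lemma image_dropVar_CFam (y : σ) : dropVar y '' CFam y F = dropVar y '' F := by
  rw [CFam, Set.image_image]
  congr 1
  funext s
  ext x
  simp [dropVar, x.2]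

end Transversals

section Trees

variable {V : Type} {G : SimpleGraph V}

lemma SimpleGraph.IsTree.eq_of_adj_of_dist_add_one_eq (hG : G.IsTree) (r : V) {c x x' : V}
    (hx : G.Adj x c) (hx' : G.Adj x' c) (hd : G.dist r x + 1 = G.dist r c)
    (hd' : G.dist r x' + 1 = G.dist r c) : x = x' := by
  have hpath : ∀ {x} (hx : G.Adj x c), G.dist r x + 1 = G.dist r c →
      ∃ q : G.Walk r x, (q.concat hx).IsPath := by
    intro x hx hd
    obtain ⟨q, hq, hql⟩ := (hG.connected r x).exists_path_of_dist
    refine ⟨q, hq.concat (fun hc => ?_) hx⟩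
    have := (G.dist_le (q.takeUntil c hc)).trans (q.length_takeUntil_le_length hc)
    omega
  obtain ⟨q, hq⟩ := hpath hx hd
  obtain ⟨q', hq'⟩ := hpath hx' hd'
  exact (Walk.concat_inj ((hG.existsUnique_path r c).unique hq hq')).1

variable {σ : Type}

def IsNbhdSubfamily (G : SimpleGraph V) (ι : σ ↪ V) (F : Set (Finset σ)) : Prop :=
  ∃ c : V → Finset σ, (∀ v, ∀ x ∈ c v, G.Adj v (ι x)) ∧ F ⊆ Set.range c

namespace IsNbhdSubfamily

variable {ι : σ ↪ V} {F : Set (Finset σ)}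

lemma mono (hF : IsNbhdSubfamily G ι F) {F' : Set (Finset σ)} (h : F' ⊆ F) :
    IsNbhdSubfamily G ι F' :=
  let ⟨c, hadj, hc⟩ := hF
  ⟨c, hadj, h.trans hc⟩

lemma image_dropVar (hF : IsNbhdSubfamily G ι F) (y : σ) :
    IsNbhdSubfamily G ((Function.Embedding.subtype _).trans ι) (dropVar y '' F) := by
  obtain ⟨c, hadj, hc⟩ := hF
  refine ⟨fun v => dropVar y (c v), fun v x hx => hadj v x (by simpa [dropVar] using hx), ?_⟩
  rintro _ ⟨e, he, rfl⟩
  obtain ⟨v, rfl⟩ := hc he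
  exact ⟨v, rfl⟩

lemma exists_meetsOthersOnlyAt [Finite V] (hF : IsNbhdSubfamily G ι F) (hG : G.IsTree)
    (hne : F.Nonempty) (hempty : ∅ ∉ F) : ∃ e ∈ F, ∃ y ∈ e, MeetsOthersOnlyAt F e y := by
  obtain ⟨c, hadj, hc⟩ := hF
  obtain ⟨r, hr⟩ := hc hne.some_mem
  obtain ⟨v, hv, hmax⟩ := Set.exists_max_image {v | c v ∈ F} (G.dist r) (Set.toFinite _)
    ⟨r, show c r ∈ F from hr ▸ hne.some_mem⟩
  -- `v` is farthest from `r` among the vertices with `c v ∈ F`; an element of `c v` shared with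
  -- some `c w` and farther from `r` than `v` would have the two parents `v` and `w`.
  have hparent : ∀ z ∈ c v, ∀ f ∈ F, f ≠ c v → z ∈ f → G.dist r (ι z) + 1 = G.dist r v := by
    intro z hz f hf hfv hzf
    obtain ⟨w, rfl⟩ := hc hf
    have hwv : w ≠ v := by rintro rfl; exact hfv rfl
    rcases hG.dist_eq_dist_add_one_of_adj r (hadj v z hz) with h | h
    · exact h.symm
    have hw := hmax w hf
    rcases hG.dist_eq_dist_add_one_of_adj r (hadj w z hzf) with h' | h'
    · omega
    · exact absurd (hG.eq_of_adj_of_dist_add_one_eq r (hadj w z hzf) (hadj v z hz)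
        h'.symm h.symm) hwv
  by_cases hshared : ∃ y ∈ c v, ∃ f ∈ F, f ≠ c v ∧ y ∈ f
  · obtain ⟨y, hy, f, hf, hfv, hyf⟩ := hshared
    refine ⟨c v, hv, y, hy, fun x hx hxy g hg hxg => by_contra fun hgv => hxy (ι.injective ?_)⟩
    exact hG.eq_of_adj_of_dist_add_one_eq r (hadj v x hx).symm (hadj v y hy).symm
      (hparent x hx g hg hgv hxg) (hparent y hy f hf hfv hyf)
  · push Not at hshared
    obtain ⟨y, hy⟩ := Finset.nonempty_iff_ne_empty.2 fun h => hempty (h ▸ hv)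
    exact ⟨c v, hv, y, hy, fun x hx _ g hg hxg => by_contra fun hgv => hshared x hx g hg hgv hxg⟩

end IsNbhdSubfamily

end Trees

section MonomialIdeals

variable {k : Type} [Field k] {σ : Type} {F : Set (Finset σ)}

lemma sqMono_eq_monomial (s : Finset σ) :
    sqMono k s = monomial (∑ i ∈ s, Finsupp.single i 1) 1 := by
  rw [monomial_sum_one]
  rfl

lemma sum_single_one_le_iff {s : Finset σ} {m : σ →₀ ℕ} :
    ∑ i ∈ s, Finsupp.single i 1 ≤ m ↔ s ⊆ m.support := by
  simp only [Finsupp.le_def, Finset.sum_apply', Finsupp.single_apply, Finset.sum_ite_eq',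
    Finset.subset_iff, Finsupp.mem_support_iff]
  exact ⟨fun h i hi => by simpa [hi, Nat.one_le_iff_ne_zero] using h i,
    fun h i => by split_ifs with hi; exacts [Nat.one_le_iff_ne_zero.2 (h hi), Nat.zero_le _]⟩

lemma mem_sqSpan_iff {p : MvPolynomial σ k} :
    p ∈ sqSpan k F ↔ ∀ m ∈ p.support, ∃ s ∈ F, s ⊆ m.support := by
  have hgen : {q | ∃ s ∈ F, q = sqMono k s} =
      (fun m => monomial m (1 : k)) '' ((fun s => ∑ i ∈ s, Finsupp.single i 1) '' F) := by
    ext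
    simp [sqMono_eq_monomial, eq_comm]
  rw [sqSpan, hgen, mem_ideal_span_monomial_image]
  simp [sum_single_one_le_iff]

lemma sqMono_mem_sqSpan {s : Finset σ} (hs : s ∈ F) : sqMono k s ∈ sqSpan k F :=
  Ideal.subset_span ⟨s, hs, rfl⟩

lemma span_X_eq_sqSpan_singleton (y : σ) :
    Ideal.span {(X y : MvPolynomial σ k)} = sqSpan k {{y}} := by
  simp [sqSpan, sqMono]

lemma sqSpan_sup (F F' : Set (Finset σ)) : sqSpan k F ⊔ sqSpan k F' = sqSpan k (F ∪ F') := by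
  rw [sqSpan, sqSpan, sqSpan, ← Ideal.span_union]
  congr 1
  ext
  simp [or_and_right, exists_or]

lemma exists_subset_iff_CFam_NFam (F : Set (Finset σ)) (y : σ) (u : Finset σ) :
    (∃ s ∈ F, s ⊆ u) ↔ (∃ s ∈ CFam y F, s ⊆ u) ∧ ∃ s ∈ NFam y F ∪ {{y}}, s ⊆ u := by
  constructor
  · rintro ⟨s, hs, hsu⟩
    refine ⟨⟨s.erase y, ⟨s, hs, rfl⟩, (s.erase_subset y).trans hsu⟩, ?_⟩
    by_cases hys : y ∈ s
    · exact ⟨{y}, Or.inr rfl, Finset.singleton_subset_iff.2 (hsu hys)⟩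
    · exact ⟨s, Or.inl ⟨hs, hys⟩, hsu⟩
  · rintro ⟨⟨_, ⟨s, hs, rfl⟩, hsu⟩, t, ht | rfl, htu⟩
    · exact ⟨t, ht.1, htu⟩
    · exact ⟨s, hs, (Finset.erase_subset_iff_of_mem (Finset.singleton_subset_iff.1 htu)).1 hsu⟩

lemma sqSpan_eq_CFam_inf_NFam_sup (F : Set (Finset σ)) (y : σ) :
    sqSpan k F = sqSpan k (CFam y F) ⊓ (sqSpan k (NFam y F) ⊔ Ideal.span {X y}) := by
  ext p
  rw [span_X_eq_sqSpan_singleton, sqSpan_sup, Ideal.mem_inf, mem_sqSpan_iff, mem_sqSpan_iff,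
    mem_sqSpan_iff, ← forall₂_and]
  exact forall₂_congr fun m _ => exists_subset_iff_CFam_NFam F y m.support

lemma sqSpan_le_span_X_image {t : Set σ} (ht : IsTransversal F t) :
    sqSpan k F ≤ Ideal.span (X '' t) := by
  rw [sqSpan, Ideal.span_le]
  rintro _ ⟨s, hs, rfl⟩
  obtain ⟨i, his, hit⟩ := ht s hs
  rw [SetLike.mem_coe, sqMono, ← Finset.mul_prod_erase s _ his]
  exact Ideal.mul_mem_right _ _ (Ideal.subset_span ⟨i, hit, rfl⟩)

lemma X_mem_span_X_image_iff {W : Set σ} {i : σ} :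
    (X i : MvPolynomial σ k) ∈ Ideal.span (X '' W) ↔ i ∈ W := by
  simp [mem_ideal_span_X_image, support_X, Finsupp.single_apply]

lemma isPrime_span_X_image (W : Set σ) :
    (Ideal.span (X '' W) : Ideal (MvPolynomial σ k)).IsPrime := by
  let φ : MvPolynomial σ k →ₐ[k] MvPolynomial σ k := aeval fun i => if i ∈ W then 0 else X i
  suffices RingHom.ker φ = Ideal.span (X '' W) from this ▸ RingHom.ker_isPrime φ
  have hsub : ∀ p, p - φ p ∈ Ideal.span (X '' W) := by
    intro p
    induction p using MvPolynomial.induction_on with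
    | C a => simp
    | add p q hp hq => simpa [sub_add_sub_comm] using add_mem hp hq
    | mul_X p i hp =>
      have : p * X i - φ (p * X i) = (p - φ p) * X i + φ p * (X i - φ (X i)) := by
        rw [map_mul]; ring
      rw [this]
      refine add_mem (Ideal.mul_mem_right _ _ hp) (Ideal.mul_mem_left _ _ ?_)
      by_cases hi : i ∈ W
      · simpa [φ, hi] using (Ideal.subset_span ⟨i, hi, rfl⟩ : X i ∈ Ideal.span (X '' W))
      · simp [φ, hi]
  refine le_antisymm (fun p hp => by simpa [RingHom.mem_ker.1 hp] using hsub p) ?_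
  rw [Ideal.span_le]
  rintro _ ⟨i, hi, rfl⟩
  simp [φ, hi]

end MonomialIdeals

section Unmixed

variable {k : Type} [Field k] {σ : Type} {F : Set (Finset σ)}

lemma primeHt_eq_height {R : Type*} [CommRing R] (P : Ideal R) (hP : P.IsPrime) :
    primeHt P hP = P.height :=
  (PrimeSpectrum.height_eq_orderHeight ⟨P, hP⟩).symm

lemma height_span_X_image_eq_of_card_eq {s t : Finset σ} (h : s.card = t.card) :
    (Ideal.span (X '' (s : Set σ)) : Ideal (MvPolynomial σ k)).height =
      (Ideal.span (X '' (t : Set σ)) : Ideal (MvPolynomial σ k)).height := by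
  obtain ⟨π, hπ⟩ := Equiv.Perm.exists_map_finset_eq s t h
  have hmap : (Ideal.span (X '' (s : Set σ))).map (renameEquiv k π).toRingEquiv =
      (Ideal.span (X '' (t : Set σ)) : Ideal (MvPolynomial σ k)) := by
    rw [Ideal.map_span, ← hπ, Finset.coe_map, Set.image_image, Set.image_image]
    simp
  rw [← hmap, RingEquiv.height_map]

lemma exists_minimal_isTransversal_of_mem_minimalPrimes {P : Ideal (MvPolynomial σ k)}
    (hP : P ∈ (sqSpan k F).minimalPrimes) :
    ∃ S : Set σ, P = Ideal.span (X '' S) ∧ Minimal (IsTransversal F) S := by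
  obtain ⟨⟨hPp, hFP⟩, hmin⟩ := hP
  set S : Set σ := {i | X i ∈ P}
  have hS : IsTransversal F S := fun e he => (hPp.prod_mem_iff).1 (hFP (sqMono_mem_sqSpan he))
  have hle : Ideal.span (X '' S) ≤ P := Ideal.span_le.2 (by rintro _ ⟨i, hi, rfl⟩; exact hi)
  have hPS : P = Ideal.span (X '' S) :=
    le_antisymm (hmin ⟨isPrime_span_X_image S, sqSpan_le_span_X_image hS⟩ hle) hle
  refine ⟨S, hPS, hS, fun T hT hTS i hi => ?_⟩
  have hPT : P ≤ Ideal.span (X '' T) :=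
    hmin ⟨isPrime_span_X_image T, sqSpan_le_span_X_image hT⟩
      ((Ideal.span_mono (Set.image_mono hTS)).trans hle)
  exact X_mem_span_X_image_iff.1 (hPT hi)

lemma TransversalUnmixed.unmixedIdeal [Finite σ] (hu : TransversalUnmixed F) :
    UnmixedIdeal (sqSpan k F) := by
  intro P Q hP hQ
  rw [primeHt_eq_height, primeHt_eq_height]
  obtain ⟨S, rfl, hS⟩ := exists_minimal_isTransversal_of_mem_minimalPrimes hP
  obtain ⟨T, rfl, hT⟩ := exists_minimal_isTransversal_of_mem_minimalPrimes hQ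
  obtain ⟨s, rfl⟩ := S.toFinite.exists_finset_coe
  obtain ⟨t, rfl⟩ := T.toFinite.exists_finset_coe
  exact height_span_X_image_eq_of_card_eq (by simpa using hu _ _ hS hT)

end Unmixed

theorem isGVD_sqSpan_of_isNbhdSubfamily (k : Type) [Field k] {V : Type} [Finite V]
    {G : SimpleGraph V} (hG : G.IsTree) {σ : Type} [Finite σ] (ι : σ ↪ V)
    {F : Set (Finset σ)} (hF : IsNbhdSubfamily G ι F) (hu : TransversalUnmixed F) :
    IsGVD k σ (sqSpan k F) := by
  induction hn : Nat.card σ using Nat.strong_induction_on generalizing σ with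
  | _ n ih =>
  have hunm : UnmixedIdeal (sqSpan k F) := hu.unmixedIdeal
  by_cases hempty : ∅ ∈ F
  · refine IsGVD.base σ _ hunm (Or.inl ?_)
    rw [Ideal.eq_top_iff_one]
    simpa [sqMono] using sqMono_mem_sqSpan (k := k) hempty
  rcases F.eq_empty_or_nonempty with rfl | hne
  · exact IsGVD.base σ _ hunm (Or.inr ⟨∅, by simp [sqSpan]⟩)
  obtain ⟨e, he, y, hy, hmeet⟩ := hF.exists_meetsOthersOnlyAt hG hne hempty
  have hcard : Nat.card {x // x ≠ y} < n := hn ▸ Finite.card_subtype_lt (not_not.2 rfl)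
  refine IsGVD.step σ _ hunm F rfl y (sqSpan_eq_CFam_inf_NFam_sup F y) ?_ ?_
  · rw [image_dropVar_CFam]
    exact ih _ hcard _ (hF.image_dropVar y) (hu.image_dropVar y) rfl
  · exact ih _ hcard _ ((hF.mono fun _ h => h.1).image_dropVar y)
      ((hu.NFam he hy hmeet).image_dropVar y) rfl

section OpenNeighborhoods

variable {V : Type} [Fintype V] (G : SimpleGraph V)

lemma isNbhdSubfamily_nbrFinset :
    IsNbhdSubfamily G (Function.Embedding.refl V) {s | ∃ v, s = nbrFinset G v} :=
  ⟨nbrFinset G, fun v x hx => by simpa [nbrFinset] using hx, by rintro _ ⟨v, rfl⟩; exact ⟨v, rfl⟩⟩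

lemma transversalUnmixed_nbrFinset_iff :
    TransversalUnmixed {s | ∃ v, s = nbrFinset G v} ↔ TDUnmixed G := by
  have htr : IsTransversal {s | ∃ v, s = nbrFinset G v} = IsTDSet G := by
    ext t
    simp [IsTransversal, IsTDSet, nbhd, nbrFinset, Set.eq_univ_iff_forall, G.adj_comm, and_comm]
  simp only [TransversalUnmixed, TDUnmixed, IsMinTDSet, htr, Set.minimal_iff_forall_ssubset]

end OpenNeighborhoods

/-- **Theorem**: the open neighborhood ideal of a finite TD-unmixed tree is
geometrically vertex decomposable. -/
theorem ONI_isGVD (k : Type) [Field k] {V : Type} [Fintype V] (G : SimpleGraph V)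
    (htree : G.IsTree) (hunm : TDUnmixed G) :
    IsGVD k V (ONI k G) :=
  isGVD_sqSpan_of_isNbhdSubfamily k htree _ (isNbhdSubfamily_nbrFinset G)
    ((transversalUnmixed_nbrFinset_iff G).2 hunm)
end

section
/- Let T be a finite TD-unmixed balanced tree of height 3, and let u be a vertex of height 2 with deg_T(u)=2. Set I = N_odd(T) ⊆ k[x_v : v∈V(T)], taken with its generating set {X_{N(v)} : v ∈ V_odd(T)}, let T' = T∖{u} and T'' = T∖N[u] (induced subgraphs). Then C_{u,I} = N_odd(T',T) and N_{u,I} = N_odd(T'',T) = N_odd(T''). -/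
/-!
In a balanced forest the heights of adjacent vertices differ by exactly one, so height parity is
a proper 2-colouring. As `u` has even height, no odd vertex is `u`, and an odd vertex not
adjacent to `u` has no neighbour in `N[u]` (a common neighbour would give it the parity of `u`);
this identifies the generators of `C_{u,I}` and `N_{u,I}`. A leaf of `T ∖ N[u]` is either a leaf
of `T` or adjacent to a neighbour of `u`, so it has even height in `T`; since a height in a finite
forest is the length of a path to a leaf, heights in `T ∖ N[u]` and in `T` then agree mod 2.
-/

open scoped Classical

section ONIDefs

variable {V : Type} [Fintype V]

/-- The odd-open neighborhood ideal of a (balanced) graph: generated by the monomials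
`X_{N(v)}` for the vertices `v` of odd height. -/
noncomputable def oddONI (k : Type) [Field k] (G : SimpleGraph V) : Ideal (MvPolynomial V k) :=
  sqSpan k {s | ∃ v : V, Odd (heightVx G v) ∧ s = nbrFinset G v}

end ONIDefs

section InducedDefs

variable {V : Type} [Fintype V]

/-- The induced odd-open neighborhood ideal `N_odd(T', T)` of the subgraph of `G` induced
on `S`:  generated by the monomials `X_{N_{T'}(v)}` for `v ∈ V(T') ∩ V_odd(T)`, the
neighborhood being taken in the induced subgraph and oddness of height in `G`. -/
noncomputable def inducedOddONI (k : Type) [Field k] (G : SimpleGraph V) (S : Set V) :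
    Ideal (MvPolynomial V k) :=
  sqSpan k {s | ∃ v : S, Odd (heightVx G (v : V)) ∧
    s = Finset.image Subtype.val (nbrFinset (G.induce S) v)}

/-- The odd-open neighborhood ideal `N_odd(T')` of the subgraph of `G` induced on `S`,
viewed in the polynomial ring on all of `V`: heights are now computed in the induced
subgraph itself. -/
noncomputable def oddONIon (k : Type) [Field k] (G : SimpleGraph V) (S : Set V) :
    Ideal (MvPolynomial V k) :=
  sqSpan k {s | ∃ v : S, Odd (heightVx (G.induce S) v) ∧
    s = Finset.image Subtype.val (nbrFinset (G.induce S) v)}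

end InducedDefs

open SimpleGraph

theorem SimpleGraph.image_val_neighborSet_induce {V : Type} {G : SimpleGraph V} (S : Set V)
    (v : S) : Subtype.val '' (G.induce S).neighborSet v = G.neighborSet v ∩ S := by
  rw [neighborSet_induce, Subtype.image_preimage_coe, Set.inter_comm]

theorem SimpleGraph.Walk.even_length_add_add {V : Type} {G : SimpleGraph V} {f : V → ℕ}
    (hf : ∀ ⦃v w⦄, G.Adj v w → Odd (f v + f w)) {v w : V} (p : G.Walk v w) :
    Even (p.length + f v + f w) := by
  induction p with
  | nil => simp
  | cons hab q ih =>
    have hab' := Nat.odd_iff.mp (hf hab)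
    rw [Walk.length_cons]
    rw [Nat.even_iff] at ih ⊢
    omega

theorem SimpleGraph.IsAcyclic.exists_isLeafVx_reachable {V : Type} [Finite V]
    {G : SimpleGraph V} (hG : G.IsAcyclic) {v x : V} (hvx : G.Adj v x) :
    ∃ l, IsLeafVx G l ∧ G.Reachable v l := by
  have := Fintype.ofFinite V
  have hfin : {n | ∃ (w : V) (p : G.Walk v w), p.IsPath ∧ p.length = n}.Finite :=
    (Set.finite_lt_nat (Fintype.card V)).subset fun n ⟨_, _, hp, hn⟩ ↦ hn ▸ hp.length_lt
  have hne : {n | ∃ (w : V) (p : G.Walk v w), p.IsPath ∧ p.length = n}.Nonempty :=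
    ⟨1, x, .cons hvx .nil, by simpa using hvx.ne, rfl⟩
  obtain ⟨w, p, hp, hlen⟩ := Nat.sSup_mem hne hfin.bddAbove
  have hmax : ∀ {y} (q : G.Walk v y), q.IsPath → q.length ≤ p.length := fun q hq ↦
    hlen ▸ le_csSup hfin.bddAbove ⟨_, q, hq, rfl⟩
  have hnil : ¬ p.Nil := fun h ↦ by
    simpa [Walk.length_eq_zero_iff.mpr h] using hmax (.cons hvx .nil) (by simpa using hvx.ne)
  -- a longest path from `v` cannot be extended, and in a forest its end has no other way back
  have hnbr : G.neighborSet w = {p.penultimate} := by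
    ext y
    refine ⟨fun (hwy : G.Adj w y) ↦ ?_, fun hy ↦ hy ▸ (p.adj_penultimate hnil).symm⟩
    by_cases hy : y ∈ p.support
    · exact hG.eq_penultimate_of_adj_end hp hwy hy
    · exact absurd (hmax _ (hp.concat hy hwy)) (by rw [Walk.length_concat]; omega)
  exact ⟨w, by rw [IsLeafVx, hnbr, Set.ncard_singleton], p.reachable⟩

section Heights

variable {V : Type} {G : SimpleGraph V}

theorem heightVx_eq_zero_of_isLeafVx {l : V} (hl : IsLeafVx G l) : heightVx G l = 0 :=
  Nat.eq_zero_of_le_zero (Nat.sInf_le ⟨l, hl, .refl l, dist_self⟩)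

theorem heightVx_eq_zero_of_neighborSet_eq_empty {v : V} (hv : G.neighborSet v = ∅) :
    heightVx G v = 0 := by
  refine Nat.sInf_eq_zero.mpr (.inr (Set.eq_empty_of_forall_notMem ?_))
  rintro _ ⟨l, hl, ⟨p⟩, -⟩
  cases p with
  | nil => simp [IsLeafVx, hv] at hl
  | cons h _ => exact hv.subset h

theorem exists_isLeafVx_dist_eq_heightVx {v l₀ : V} (hl₀ : IsLeafVx G l₀)
    (hr : G.Reachable v l₀) :
    ∃ l, IsLeafVx G l ∧ G.Reachable v l ∧ G.dist v l = heightVx G v :=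
  Nat.sInf_mem (s := {n | ∃ l, IsLeafVx G l ∧ G.Reachable v l ∧ G.dist v l = n})
    ⟨_, l₀, hl₀, hr, rfl⟩

theorem heightVx_le_heightVx_add_one {v w l₀ : V} (hl₀ : IsLeafVx G l₀)
    (hr : G.Reachable w l₀) (hvw : G.Adj v w) : heightVx G v ≤ heightVx G w + 1 := by
  obtain ⟨l, hl, hrl, hd⟩ := exists_isLeafVx_dist_eq_heightVx hl₀ hr
  obtain ⟨p, hp⟩ := hrl.exists_walk_length_eq_dist
  calc heightVx G v ≤ G.dist v l := Nat.sInf_le ⟨l, hl, (p.cons hvw).reachable, rfl⟩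
    _ ≤ (p.cons hvw).length := dist_le _
    _ = heightVx G w + 1 := by rw [Walk.length_cons, hp, hd]

theorem SimpleGraph.IsAcyclic.even_heightVx_add [Finite V] (hG : G.IsAcyclic) {f : V → ℕ}
    (hadj : ∀ ⦃v w⦄, G.Adj v w → Odd (f v + f w)) (hleaf : ∀ ⦃l⦄, IsLeafVx G l → Even (f l))
    (hiso : ∀ ⦃v⦄, G.neighborSet v = ∅ → Even (f v)) (v : V) :
    Even (heightVx G v + f v) := by
  by_cases hv : G.neighborSet v = ∅
  · rw [heightVx_eq_zero_of_neighborSet_eq_empty hv, zero_add]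
    exact hiso hv
  obtain ⟨x, hx⟩ := Set.nonempty_iff_ne_empty.mpr hv
  obtain ⟨l₀, hl₀, hr₀⟩ := hG.exists_isLeafVx_reachable hx
  obtain ⟨l, hl, hr, hd⟩ := exists_isLeafVx_dist_eq_heightVx hl₀ hr₀
  obtain ⟨p, hp⟩ := hr.exists_walk_length_eq_dist
  have hpath := p.even_length_add_add hadj
  have hfl := hleaf hl
  rw [hp, hd] at hpath
  rw [Nat.even_iff] at hpath hfl ⊢
  omega

theorem IsBalanced.odd_heightVx_add [Finite V] (hbal : IsBalanced G) (hG : G.IsAcyclic)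
    {v w : V} (hvw : G.Adj v w) : Odd (heightVx G v + heightVx G w) := by
  obtain ⟨l, hl, hr⟩ := hG.exists_isLeafVx_reachable hvw
  obtain ⟨l', hl', hr'⟩ := hG.exists_isLeafVx_reachable hvw.symm
  have := heightVx_le_heightVx_add_one hl' hr' hvw
  have := heightVx_le_heightVx_add_one hl hr hvw.symm
  have := hbal v w hvw
  rw [Nat.odd_iff]
  omega

theorem IsBalanced.neighborSet_subset_compl_of_odd [Finite V] (hbal : IsBalanced G)
    (hG : G.IsAcyclic) {u v : V} (hu : Even (heightVx G u)) (hv : Odd (heightVx G v))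
    (hvu : ¬ G.Adj v u) : G.neighborSet v ⊆ (G.neighborSet u ∪ {u})ᶜ := by
  rintro x (hvx : G.Adj v x) (hux | rfl)
  · have h₁ := hbal.odd_heightVx_add hG hvx
    have h₂ := hbal.odd_heightVx_add hG hux
    rw [Nat.odd_iff] at hv h₁ h₂
    rw [Nat.even_iff] at hu
    omega
  · exact hvu hvx

theorem IsBalanced.odd_heightVx_induce_iff [Finite V] (hbal : IsBalanced G)
    (hG : G.IsAcyclic) {S : Set V} (hS : ∀ v ∈ S, Odd (heightVx G v) → G.neighborSet v ⊆ S)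
    (v : S) : Odd (heightVx (G.induce S) v) ↔ Odd (heightVx G v) := by
  have hsame : ∀ w : S, Odd (heightVx G w) →
      Subtype.val '' (G.induce S).neighborSet w = G.neighborSet w := fun w hw ↦ by
    rw [image_val_neighborSet_induce, Set.inter_eq_left]
    exact hS w w.2 hw
  have hpar := (hG.induce S).even_heightVx_add (f := fun w ↦ heightVx G w)
    (fun _ _ hvw ↦ hbal.odd_heightVx_add hG hvw) (fun l hl ↦ ?_) (fun w hw ↦ ?_) v
  · rw [Nat.even_add] at hpar
    simpa only [Nat.not_even_iff_odd] using hpar.not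
  all_goals
    by_contra hodd
    rw [Nat.not_even_iff_odd] at hodd
  · have hlG : IsLeafVx G l := by
      rwa [IsLeafVx, ← hsame l hodd, Set.ncard_image_of_injective _ Subtype.val_injective]
    simp [heightVx_eq_zero_of_isLeafVx hlG] at hodd
  · have hwG : G.neighborSet w = ∅ := by rw [← hsame w hodd, hw, Set.image_empty]
    simp [heightVx_eq_zero_of_neighborSet_eq_empty hwG] at hodd

end Heights

section OddNeighborhoodIdeal

variable {V : Type} [Fintype V] {G : SimpleGraph V}

theorem mem_nbrFinset {v x : V} : x ∈ nbrFinset G v ↔ G.Adj v x := by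
  simp [nbrFinset]

theorem image_val_nbrFinset_induce (S : Set V) (v : S) :
    (nbrFinset (G.induce S) v).image Subtype.val = (nbrFinset G v).filter (· ∈ S) := by
  ext x
  simp [nbrFinset]

theorem image_val_nbrFinset_induce_of_subset (S : Set V) {v : S} (h : G.neighborSet v ⊆ S) :
    (nbrFinset (G.induce S) v).image Subtype.val = nbrFinset G v := by
  rw [image_val_nbrFinset_induce]
  exact Finset.filter_true_of_mem fun x hx ↦ h (mem_nbrFinset.mp hx)

variable (G) in
def oddNbrFinsets : Set (Finset V) := {s | ∃ v : V, Odd (heightVx G v) ∧ s = nbrFinset G v}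

theorem sqSpan_CFam_oddNbrFinsets (k : Type) [Field k] {u : V}
    (hne : ∀ {v}, Odd (heightVx G v) → v ≠ u) :
    sqSpan k (CFam u (oddNbrFinsets G)) = inducedOddONI k G {x | x ≠ u} := by
  unfold inducedOddONI
  -- two passes: unfolding `∈ {x | x ≠ u}` first would also rewrite the `Fintype` instance
  -- inside `nbrFinset`, and `image_val_nbrFinset_induce` would no longer match
  simp only [image_val_nbrFinset_induce]
  simp only [Set.mem_ofPred_eq, Finset.filter_ne']
  congr 1
  ext s
  constructor
  · rintro ⟨_, ⟨v, hv, rfl⟩, rfl⟩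
    exact ⟨⟨v, hne hv⟩, hv, rfl⟩
  · rintro ⟨⟨v, _⟩, hv, rfl⟩
    exact ⟨_, ⟨v, hv, rfl⟩, rfl⟩

theorem sqSpan_NFam_oddNbrFinsets (k : Type) [Field k] {u : V} {S : Set V}
    (hmem : ∀ v, Odd (heightVx G v) → (v ∈ S ↔ ¬ G.Adj v u))
    (hclosed : ∀ v ∈ S, Odd (heightVx G v) → G.neighborSet v ⊆ S) :
    sqSpan k (NFam u (oddNbrFinsets G)) = inducedOddONI k G S := by
  have hnbr : ∀ v : S, Odd (heightVx G v) →
      (nbrFinset (G.induce S) v).image Subtype.val = nbrFinset G v := fun v hv ↦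
    image_val_nbrFinset_induce_of_subset S (hclosed v v.2 hv)
  unfold inducedOddONI
  congr 1
  ext s
  constructor
  · rintro ⟨⟨v, hv, rfl⟩, hus⟩
    have hvS := (hmem v hv).mpr fun h ↦ hus (mem_nbrFinset.mpr h)
    exact ⟨⟨v, hvS⟩, hv, (hnbr ⟨v, hvS⟩ hv).symm⟩
  · rintro ⟨v, hv, rfl⟩
    rw [hnbr v hv]
    exact ⟨⟨v, hv, rfl⟩, fun h ↦ (hmem v hv).mp v.2 (mem_nbrFinset.mp h)⟩

theorem inducedOddONI_eq_oddONIon (k : Type) [Field k] {S : Set V}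
    (h : ∀ v : S, Odd (heightVx (G.induce S) v) ↔ Odd (heightVx G v)) :
    inducedOddONI k G S = oddONIon k G S := by
  simp only [inducedOddONI, oddONIon, h]

end OddNeighborhoodIdeal

theorem C_and_N_of_oddONI_general (k : Type) [Field k] {V : Type} [Fintype V] (G : SimpleGraph V)
    (htree : G.IsTree) (hbal : IsBalanced G) (u : V) (hu2 : heightVx G u = 2) :
    sqSpan k (CFam u {s | ∃ v : V, Odd (heightVx G v) ∧ s = nbrFinset G v})
        = inducedOddONI k G {x | x ≠ u} ∧
    sqSpan k (NFam u {s | ∃ v : V, Odd (heightVx G v) ∧ s = nbrFinset G v})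
        = inducedOddONI k G ((G.neighborSet u ∪ {u})ᶜ) ∧
    inducedOddONI k G ((G.neighborSet u ∪ {u})ᶜ)
        = oddONIon k G ((G.neighborSet u ∪ {u})ᶜ) := by
  have hG := htree.isAcyclic
  have hu : Even (heightVx G u) := hu2 ▸ even_two
  have hne : ∀ {v}, Odd (heightVx G v) → v ≠ u := fun hv h ↦ Nat.not_odd_iff_even.mpr hu (h ▸ hv)
  have hclosed : ∀ v ∈ (G.neighborSet u ∪ {u})ᶜ, Odd (heightVx G v) →
      G.neighborSet v ⊆ (G.neighborSet u ∪ {u})ᶜ := fun v hvS hv ↦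
    hbal.neighborSet_subset_compl_of_odd hG hu hv fun h ↦ hvS (.inl h.symm)
  refine ⟨sqSpan_CFam_oddNbrFinsets k hne, sqSpan_NFam_oddNbrFinsets k (fun v hv ↦ ?_) hclosed,
    inducedOddONI_eq_oddONIon k (hbal.odd_heightVx_induce_iff hG hclosed)⟩
  simp [hne hv, G.adj_comm u v]

/-- **Lemma** (Lemma 4.3): let `T` be a finite TD-unmixed balanced tree of height 3 and
`u` a vertex of height 2 and degree 2, and let `I = N_odd(T)` with its generating set
`{X_{N(v)} : v ∈ V_odd(T)}`.  Then `C_{u,I} = N_odd(T∖{u}, T)` and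
`N_{u,I} = N_odd(T∖N[u], T) = N_odd(T∖N[u])`. -/
theorem C_and_N_of_oddONI (k : Type) [Field k] {V : Type} [Fintype V] (G : SimpleGraph V)
    (htree : G.IsTree) (hbal : IsBalanced G) (hunm : TDUnmixed G)
    (hht : heightGr G = 3) (u : V) (hu2 : heightVx G u = 2)
    (hdeg : (G.neighborSet u).ncard = 2) :
    sqSpan k (CFam u {s | ∃ v : V, Odd (heightVx G v) ∧ s = nbrFinset G v})
        = inducedOddONI k G {x | x ≠ u} ∧
    sqSpan k (NFam u {s | ∃ v : V, Odd (heightVx G v) ∧ s = nbrFinset G v})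
        = inducedOddONI k G ((G.neighborSet u ∪ {u})ᶜ) ∧
    inducedOddONI k G ((G.neighborSet u ∪ {u})ᶜ)
        = oddONIon k G ((G.neighborSet u ∪ {u})ᶜ) :=
  C_and_N_of_oddONI_general k G htree hbal u hu2
end
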